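/- arXiv:2205.12202 — 3 statements merged into one kernel-verified Lean document; each statement's English description precedes it below -/
import Mathlib

section
/- Let $z_1,\ldots,z_n$ be real random variables, $m\geq 1$ an integer, and $c>0$ a constant such that (i) $\mathbb{E}(z_i^{2m}) < c$ for all $i$, and (ii) there exists a sigma-algebra $\mathcal{F}$ with $\mathbb{E}(z_i\mid\mathcal{F})=0$ for all $i$ and $z_1,\ldots,z_n$ conditionally independent given $\mathcal{F}$. Then $\mathbb{E}\{(\sum_{i=1}^n z_i)^{2m}\} \leq c\, c_m n^m$, where $c_m$ is a constant depending only on $m$. -/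
/-!
Expand `(∑ i, z i)^(2m)` into the monomials `∏ k, z (f k)` indexed by `f : Fin (2m) → ι`.
If some index occurs exactly once in `f`, conditional independence given `F` splits off that
factor, whose conditional mean is zero, so the monomial has mean zero. In every remaining monomial
each index occurs at least twice, so `f` takes at most `m` values and factors through `Fin m`:
there are at most `n^m m^(2m)` such `f`. Each of them has mean at most `2mc`, by
`|∏ a_k| ≤ ∑ |a_k|^(2m)`. Hence one may take `c_m = 2m · m^(2m)`.
-/

open MeasureTheory ProbabilityTheory Filter
open scoped BigOperators

section

open Finset

lemma Finset.abs_prod_le_sum_abs_pow_card {ι : Type*} {s : Finset ι} (hs : s.Nonempty)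
    (a : ι → ℝ) : |∏ i ∈ s, a i| ≤ ∑ i ∈ s, |a i| ^ #s := by
  obtain ⟨i₀, hi₀, hmax⟩ := s.exists_max_image (fun i => |a i|) hs
  calc |∏ i ∈ s, a i| = ∏ i ∈ s, |a i| := abs_prod s a
    _ ≤ ∏ _i ∈ s, |a i₀| := prod_le_prod (fun i _ => abs_nonneg _) hmax
    _ = |a i₀| ^ #s := prod_const _
    _ ≤ ∑ i ∈ s, |a i| ^ #s :=
      single_le_sum (f := fun i => |a i| ^ #s) (fun i _ => by positivity) hi₀

lemma norm_prod_le_sum_pow_two_mul {m : ℕ} (hm : m ≠ 0) (a : Fin (2 * m) → ℝ) :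
    ‖∏ k, a k‖ ≤ ∑ k, a k ^ (2 * m) := by
  have : Nonempty (Fin (2 * m)) := ⟨⟨0, by omega⟩⟩
  simpa only [Real.norm_eq_abs, card_univ, Fintype.card_fin, (even_two_mul m).pow_abs]
    using abs_prod_le_sum_abs_pow_card univ_nonempty a

lemma two_mul_card_image_le {α β : Type*} [Fintype α] [DecidableEq β] {f : α → β}
    (hf : ∀ a, ∃ a' ≠ a, f a' = f a) : 2 * #(univ.image f) ≤ Fintype.card α := by
  rw [← card_univ, card_eq_sum_card_image f univ, mul_comm, ← smul_eq_mul, ← sum_const]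
  refine sum_le_sum fun b hb => ?_
  obtain ⟨a, -, rfl⟩ := mem_image.mp hb
  obtain ⟨a', hne, ha'⟩ := hf a
  exact one_lt_card.mpr ⟨a', by simp [ha'], a, by simp, hne⟩

lemma exists_comp_eq_of_card_image_le {α β : Type*} [Fintype α] [DecidableEq β] [Nonempty β]
    {f : α → β} {k : ℕ} (hf : #(univ.image f) ≤ k) :
    ∃ g : Fin k → β, ∃ h : α → Fin k, f = g ∘ h := by
  set e : univ.image f ↪ Fin k :=
    (univ.image f).equivFin.toEmbedding.trans (Fin.castLEEmb hf)
  refine ⟨Function.extend e Subtype.val (fun _ => Classical.arbitrary β),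
    fun a => e ⟨f a, mem_image_of_mem f (mem_univ a)⟩, funext fun a => ?_⟩
  simp only [Function.comp_apply, e.injective.extend_apply]

lemma card_filter_card_image_le {α β : Type*} [Fintype α] [Fintype β] [DecidableEq α]
    [DecidableEq β] [Nonempty β] (k : ℕ) :
    #{f : α → β | #(univ.image f) ≤ k} ≤ Fintype.card β ^ k * k ^ Fintype.card α := by
  classical
  calc #{f : α → β | #(univ.image f) ≤ k}
      ≤ #(univ.image fun gh : (Fin k → β) × (α → Fin k) => gh.1 ∘ gh.2) := by
        refine card_le_card fun f hf => ?_
        obtain ⟨g, h, rfl⟩ := exists_comp_eq_of_card_image_le (mem_filter.mp hf).2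
        exact mem_image.mpr ⟨(g, h), mem_univ _, rfl⟩
    _ ≤ Fintype.card ((Fin k → β) × (α → Fin k)) := card_image_le
    _ = Fintype.card β ^ k * k ^ Fintype.card α := by simp

end

lemma integrable_of_integrable_pow_two_mul {Ω : Type*} [MeasurableSpace Ω] {μ : Measure Ω}
    [IsFiniteMeasure μ] {X : Ω → ℝ} (hX : AEStronglyMeasurable X μ) {N : ℕ} (hN : N ≠ 0)
    (h : Integrable (fun ω => X ω ^ (2 * N)) μ) : Integrable X μ := by
  refine ((integrable_const 1).add h).mono' hX (Eventually.of_forall fun ω => ?_)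
  simp only [Real.norm_eq_abs, Pi.add_apply]
  rcases le_or_gt |X ω| 1 with hle | hgt
  · linarith [(even_two_mul N).pow_nonneg (X ω)]
  · linarith [le_self_pow₀ hgt.le (by omega : 2 * N ≠ 0), (even_two_mul N).pow_abs (X ω)]

namespace ProbabilityTheory

lemma Kernel.IndepFun.ae_indepFun {α Ω : Type*} {mα : MeasurableSpace α} {mΩ : MeasurableSpace Ω}
    {κ : Kernel α Ω} [IsMarkovKernel κ] {μ : Measure α} {X Y : Ω → ℝ}
    (hX : Measurable X) (hY : Measurable Y) (h : Kernel.IndepFun X Y κ μ) :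
    ∀ᵐ a ∂μ, ProbabilityTheory.IndepFun X Y (κ a) := by
  have hgen : ∀ Z : Ω → ℝ, MeasurableSpace.comap Z (borel ℝ)
      = MeasurableSpace.generateFrom ((Z ⁻¹' ·) '' ⋃ q : ℚ, {Set.Iic (q : ℝ)}) := fun Z => by
    rw [Real.borel_eq_generateFrom_Iic_rat, MeasurableSpace.comap_generateFrom]
  -- the rational half-lines form a countable generating π-system, so countably many a.e.
  -- identities suffice
  have h_rat : ∀ᵐ a ∂μ, ∀ q r : ℚ, κ a (X ⁻¹' Set.Iic (q : ℝ) ∩ Y ⁻¹' Set.Iic (r : ℝ))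
      = κ a (X ⁻¹' Set.Iic (q : ℝ)) * κ a (Y ⁻¹' Set.Iic (r : ℝ)) := by
    simp only [ae_all_iff]
    exact fun q r => h _ _ ⟨_, measurableSet_Iic, rfl⟩ ⟨_, measurableSet_Iic, rfl⟩
  filter_upwards [h_rat] with a ha
  refine ProbabilityTheory.IndepSets.indep hX.comap_le hY.comap_le
    (Real.isPiSystem_Iic_rat.comap X) (Real.isPiSystem_Iic_rat.comap Y) (hgen X) (hgen Y) ?_
  rintro _ _ ⟨_, hq, rfl⟩ ⟨_, hr, rfl⟩
  simp only [Set.mem_iUnion, Set.mem_singleton_iff] at hq hr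
  obtain ⟨q, rfl⟩ := hq
  obtain ⟨r, rfl⟩ := hr
  exact Eventually.of_forall fun _ => ha q r

lemma CondIndepFun.integral_mul_eq_zero {Ω : Type*} {F mΩ : MeasurableSpace Ω}
    [StandardBorelSpace Ω] {μ : Measure Ω} [IsFiniteMeasure μ] {hF : F ≤ mΩ} {X Y : Ω → ℝ}
    (h : CondIndepFun F hF X Y μ) (hX : Measurable X) (hY : Measurable Y)
    (hX_int : Integrable X μ) (hXY_int : Integrable (X * Y) μ) (hX0 : μ[X | F] =ᵐ[μ] 0) :
    ∫ ω, (X * Y) ω ∂μ = 0 := by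
  have h_indep : ∀ᵐ ω ∂μ, IndepFun X Y (condExpKernel μ F ω) :=
    ae_of_ae_trim hF (Kernel.IndepFun.ae_indepFun hX hY h)
  have h_zero : μ[X * Y | F] =ᵐ[μ] 0 := by
    filter_upwards [h_indep, condExp_ae_eq_integral_condExpKernel hF hXY_int,
      (condExp_ae_eq_integral_condExpKernel hF hX_int).symm.trans hX0] with ω hω hXY hX_ω
    rw [hXY, hω.integral_mul_eq_mul_integral hX.aestronglyMeasurable hY.aestronglyMeasurable,
      hX_ω, Pi.zero_apply, zero_mul]
  rw [← integral_condExp hF, integral_congr_ae h_zero, Pi.zero_def, integral_zero]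

open Finset in
lemma iCondIndepFun.integral_prod_comp_eq_zero {Ω ι κ : Type*} [Fintype ι] [DecidableEq ι]
    [Fintype κ] [DecidableEq κ] {F mΩ : MeasurableSpace Ω} [StandardBorelSpace Ω]
    {μ : Measure Ω} [IsFiniteMeasure μ] {hF : F ≤ mΩ} {z : ι → Ω → ℝ}
    (h : iCondIndepFun F hF z μ) (hz : ∀ i, Measurable (z i)) {f : κ → ι} {k₀ : κ}
    (hk₀ : ∀ k ≠ k₀, f k ≠ f k₀) (hz_int : Integrable (z (f k₀)) μ)
    (hz0 : μ[z (f k₀) | F] =ᵐ[μ] 0) (hf_int : Integrable (fun ω => ∏ k, z (f k) ω) μ) :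
    ∫ ω, ∏ k, z (f k) ω ∂μ = 0 := by
  have hmem : ∀ k ∈ univ.erase k₀, f k ∈ univ.erase (f k₀) := fun k hk =>
    mem_erase.mpr ⟨hk₀ k (mem_erase.mp hk).1, mem_univ _⟩
  set Y : Ω → ℝ := fun ω => ∏ k ∈ univ.erase k₀, z (f k) ω
  have hY : Y = (fun v : univ.erase (f k₀) → ℝ =>
      ∏ k ∈ (univ.erase k₀).attach, v ⟨f k, hmem k k.2⟩) ∘ fun ω i => z i ω := by
    funext ω
    exact (prod_attach _ fun k => z (f k) ω).symm
  have h_indep : CondIndepFun F hF (z (f k₀)) Y μ := by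
    rw [hY]
    refine (h.condIndepFun_finset {f k₀} (univ.erase (f k₀)) (by simp) hz).comp
      (measurable_pi_apply ⟨f k₀, mem_singleton_self _⟩) ?_
    exact Finset.measurable_prod _ fun k _ => measurable_pi_apply _
  have h_split : z (f k₀) * Y = fun ω => ∏ k, z (f k) ω :=
    funext fun ω => mul_prod_erase univ (fun k => z (f k) ω) (mem_univ k₀)
  rw [← h_split] at hf_int ⊢
  exact h_indep.integral_mul_eq_zero (hz _) (Finset.measurable_prod _ fun k _ => hz (f k))
    hz_int hf_int hz0

end ProbabilityTheory

section Monomials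

variable {Ω ι : Type*} [MeasurableSpace Ω] {μ : Measure Ω} {z : ι → Ω → ℝ} {m : ℕ}

lemma integrable_prod_comp_of_integrable_pow (hm : m ≠ 0) (hz : ∀ i, Measurable (z i))
    (hint : ∀ i, Integrable (fun ω => z i ω ^ (2 * m)) μ) (f : Fin (2 * m) → ι) :
    Integrable (fun ω => ∏ k, z (f k) ω) μ :=
  (integrable_finsetSum _ fun k _ => hint (f k)).mono'
    (Finset.measurable_prod _ fun k _ => hz (f k)).aestronglyMeasurable
    (ae_of_all _ fun _ => norm_prod_le_sum_pow_two_mul hm _)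

lemma integral_prod_comp_le (hm : m ≠ 0) (hz : ∀ i, Measurable (z i))
    (hint : ∀ i, Integrable (fun ω => z i ω ^ (2 * m)) μ) {c : ℝ}
    (hc : ∀ i, ∫ ω, z i ω ^ (2 * m) ∂μ ≤ c) (f : Fin (2 * m) → ι) :
    ∫ ω, ∏ k, z (f k) ω ∂μ ≤ 2 * m * c :=
  calc ∫ ω, ∏ k, z (f k) ω ∂μ ≤ ∫ ω, ∑ k, z (f k) ω ^ (2 * m) ∂μ :=
        integral_mono (integrable_prod_comp_of_integrable_pow hm hz hint f)
          (integrable_finsetSum _ fun k _ => hint (f k))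
          fun ω => (le_abs_self _).trans (norm_prod_le_sum_pow_two_mul hm _)
    _ = ∑ k, ∫ ω, z (f k) ω ^ (2 * m) ∂μ := integral_finsetSum _ fun k _ => hint (f k)
    _ ≤ ∑ _k : Fin (2 * m), c := Finset.sum_le_sum fun k _ => hc (f k)
    _ = 2 * m * c := by simp

end Monomials

open Finset in
theorem integral_sum_pow_two_mul_le {Ω ι : Type*} [Fintype ι] {F mΩ : MeasurableSpace Ω}
    [StandardBorelSpace Ω] {μ : Measure Ω} [IsFiniteMeasure μ] {hF : F ≤ mΩ} {m : ℕ}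
    (hm : m ≠ 0) {z : ι → Ω → ℝ} (h : iCondIndepFun F hF z μ) (hz : ∀ i, Measurable (z i))
    (hz0 : ∀ i, μ[z i | F] =ᵐ[μ] 0) (hint : ∀ i, Integrable (fun ω => z i ω ^ (2 * m)) μ)
    {c : ℝ} (hc : ∀ i, ∫ ω, z i ω ^ (2 * m) ∂μ ≤ c) :
    ∫ ω, (∑ i, z i ω) ^ (2 * m) ∂μ ≤ c * (2 * m * m ^ (2 * m)) * Fintype.card ι ^ m := by
  classical
  obtain hι | hι := isEmpty_or_nonempty ι
  · simp [hm]
  have hc0 : 0 ≤ c := (integral_nonneg fun _ => (even_two_mul m).pow_nonneg _).trans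
    (hc (Classical.arbitrary ι))
  have h_expand : ∫ ω, (∑ i, z i ω) ^ (2 * m) ∂μ
      = ∑ f : Fin (2 * m) → ι, ∫ ω, ∏ k, z (f k) ω ∂μ := by
    simp_rw [Fintype.sum_pow]
    exact integral_finsetSum _ fun f _ => integrable_prod_comp_of_integrable_pow hm hz hint f
  -- a monomial in which some variable occurs exactly once has zero mean
  have h_vanish :
      ∑ f : Fin (2 * m) → ι with ¬ ∀ k, ∃ k' ≠ k, f k' = f k, ∫ ω, ∏ k, z (f k) ω ∂μ = 0 := by
    refine sum_eq_zero fun f hf => ?_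
    obtain ⟨k₀, hk₀⟩ : ∃ k₀, ∀ k ≠ k₀, f k ≠ f k₀ := by simpa using (mem_filter.mp hf).2
    exact h.integral_prod_comp_eq_zero hz hk₀
      (integrable_of_integrable_pow_two_mul (hz _).aestronglyMeasurable hm (hint _)) (hz0 _)
      (integrable_prod_comp_of_integrable_pow hm hz hint f)
  have h_card : #{f : Fin (2 * m) → ι | ∀ k, ∃ k' ≠ k, f k' = f k}
      ≤ Fintype.card ι ^ m * m ^ (2 * m) := by
    refine (card_le_card (monotone_filter_right _ fun f _ hf => ?_)).trans
      (by simpa using card_filter_card_image_le (α := Fin (2 * m)) (β := ι) m)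
    have := two_mul_card_image_le hf
    rw [Fintype.card_fin] at this
    omega
  rw [h_expand, ← sum_filter_add_sum_filter_not univ (fun f => ∀ k, ∃ k' ≠ k, f k' = f k),
    h_vanish, add_zero]
  calc ∑ f : Fin (2 * m) → ι with ∀ k, ∃ k' ≠ k, f k' = f k, ∫ ω, ∏ k, z (f k) ω ∂μ
      ≤ #{f : Fin (2 * m) → ι | ∀ k, ∃ k' ≠ k, f k' = f k} • (2 * m * c) :=
        sum_le_card_nsmul _ _ _ fun f _ => integral_prod_comp_le hm hz hint hc f
    _ ≤ ((Fintype.card ι ^ m * m ^ (2 * m) : ℕ) : ℝ) * (2 * m * c) := by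
        rw [nsmul_eq_mul]
        gcongr
    _ = c * (2 * m * m ^ (2 * m)) * Fintype.card ι ^ m := by push_cast; ring

/-- moment bound for conditionally centered, conditionally independent sums:
if `E(z_i^{2m}) < c` for all `i`, and there is a sigma-algebra `F` with `E(z_i ∣ F) = 0` and
`z_1, …, z_n` conditionally independent given `F`, then
`E{(∑ z_i)^{2m}} ≤ c c_m n^m` for a constant `c_m` depending only on `m`. -/
theorem stmt0 (m : ℕ) (hm : 1 ≤ m) :
    ∃ cm : ℝ, 0 < cm ∧
      ∀ (Ω : Type) [inst : MeasurableSpace Ω] [StandardBorelSpace Ω]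
        (μ : Measure Ω) [IsProbabilityMeasure μ]
        (n : ℕ) (z : Fin n → Ω → ℝ) (c : ℝ),
        0 < c →
        (∀ i, Measurable (z i)) →
        (∀ i, Integrable (fun ω => (z i ω) ^ (2 * m)) μ) →
        (∀ i, ∫ ω, (z i ω) ^ (2 * m) ∂μ < c) →
        (∃ (F : MeasurableSpace Ω) (hF : F ≤ inst),
          (∀ i, μ[z i | F] =ᵐ[μ] fun _ => (0 : ℝ)) ∧
          iCondIndepFun F hF (m := fun _ : Fin n => (inferInstance : MeasurableSpace ℝ)) z μ) →
        Integrable (fun ω => (∑ i, z i ω) ^ (2 * m)) μ →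
        ∫ ω, (∑ i, z i ω) ^ (2 * m) ∂μ ≤ c * cm * (n : ℝ) ^ m := by
  have hm_pos : (0 : ℝ) < m := by exact_mod_cast hm
  refine ⟨2 * m * m ^ (2 * m), by positivity, ?_⟩
  rintro Ω _ _ μ _ n z c - hz hint hc ⟨F, hF, hz0, h⟩ -
  simpa using integral_sum_pow_two_mul_le (by omega) h hz hz0 hint fun i => (hc i).le
end

section
/- Let $\tilde{C}\in\mathbb{R}^{n\times K}$ have orthonormal columns and let $U\in\mathbb{R}^{n\times K}$ have orthonormal columns with $\operatorname{im}(U)$ contained in $\operatorname{im}(\tilde{C})\oplus\operatorname{im}(Q)$, where the columns of $Q\in\mathbb{R}^{n\times(n-K)}$ form an orthonormal basis for $\ker(\tilde{C}^{\top})$. Write $U=\tilde{C}v_u + Q z_u$ with $v_u\in\mathbb{R}^{K\times K}$, $z_u\in\mathbb{R}^{(n-K)\times K}$. Then $v_u^{\top}v_u + z_u^{\top}z_u = I_K$, and for $\delta = \|UU^{\top}-\tilde{C}\tilde{C}^{\top}\|_2$ there is a universal constant $c>1$ (depending only on $K$) such that $\|z_u\|_2\in[c^{-1}\delta, c\delta]$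 and $\|v_u - v\|_2 \in [c^{-1}\delta^2, c\delta^2]$, where $v=A_uB_u^{\top}$ for $A_u, B_u$ the left and right singular-vector matrices of $v_u$. -/
open Matrix
open scoped BigOperators
open scoped Matrix.Norms.L2Operator

/-- The ℓ²→ℓ² operator (spectral) norm of a real matrix. -/
noncomputable def specNorm {α β : Type*} [Fintype α] [Fintype β] [DecidableEq β]
    (A : Matrix α β ℝ) : ℝ :=
  ‖LinearMap.toContinuousLinearMap (Matrix.toEuclideanLin A)‖

section Aux
set_option linter.unusedSectionVars false
variable {m n l : Type*} [Fintype m] [Fintype n] [Fintype l] [DecidableEq m] [DecidableEq n] [DecidableEq l]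

lemma specNorm_eq_l2 {α β : Type*} [Fintype α] [Fintype β] [DecidableEq β]
    (A : Matrix α β ℝ) : specNorm A = ‖A‖ := rfl

set_option linter.unusedSectionVars false
variable {m n l : Type*} [Fintype m] [Fintype n] [Fintype l] [DecidableEq m] [DecidableEq n] [DecidableEq l]

lemma my_norm_transpose (A : Matrix m n ℝ) : ‖Aᵀ‖ = ‖A‖ := by
  rw [← Matrix.conjTranspose_eq_transpose_of_trivial, Matrix.l2_opNorm_conjTranspose]

lemma my_norm_tmul (A : Matrix m n ℝ) : ‖Aᵀ * A‖ = ‖A‖ * ‖A‖ := by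
  rw [← Matrix.conjTranspose_eq_transpose_of_trivial, Matrix.l2_opNorm_conjTranspose_mul_self]

lemma my_norm_one_le : ‖(1 : Matrix n n ℝ)‖ ≤ 1 := by
  rw [Matrix.l2_opNorm_def]
  apply ContinuousLinearMap.opNorm_le_bound _ zero_le_one
  intro x
  rw [one_mul]
  apply le_of_eq
  congr 1
  ext i
  simp [Matrix.toEuclideanLin_apply]

lemma orth_norm_le (A : Matrix m n ℝ) (h : Aᵀ * A = 1) : ‖A‖ ≤ 1 := by
  have h2 : ‖A‖ * ‖A‖ ≤ 1 := by rw [← my_norm_tmul, h]; exact my_norm_one_le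
  nlinarith [norm_nonneg (E := Matrix m n ℝ) A]

-- diagonal norm bounds
lemma euclid_apply (A : Matrix m n ℝ) (x : EuclideanSpace ℝ n) (i : m) :
    (((Matrix.toEuclideanLin (𝕜 := ℝ) (m := m) (n := n)).trans
      LinearMap.toContinuousLinearMap A) x) i = (A *ᵥ (x : n → ℝ)) i := rfl

lemma le_diag_norm (d : n → ℝ) (i : n) : |d i| ≤ ‖Matrix.diagonal d‖ := by
  rw [Matrix.l2_opNorm_def]
  have h := ((Matrix.toEuclideanLin (𝕜 := ℝ) (m := n) (n := n)).trans
      LinearMap.toContinuousLinearMap (Matrix.diagonal d)).le_opNorm (EuclideanSpace.single i 1)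
  simp only [EuclideanSpace.norm_single, norm_one, mul_one] at h
  refine le_trans ?_ h
  apply le_of_eq
  have : ((Matrix.toEuclideanLin (𝕜 := ℝ) (m := n) (n := n)).trans
      LinearMap.toContinuousLinearMap (Matrix.diagonal d)) (EuclideanSpace.single i 1)
      = EuclideanSpace.single i (d i) := by
    ext j
    rw [euclid_apply]
    by_cases hji : j = i
    · subst hji; simp [Matrix.mulVec_diagonal]
    · simp [Matrix.mulVec_diagonal, hji, EuclideanSpace.single_apply]
  rw [this, EuclideanSpace.norm_single]
  simp

lemma diag_norm_le (d : n → ℝ) (M : ℝ) (hM : 0 ≤ M) (h : ∀ i, |d i| ≤ M) :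
    ‖Matrix.diagonal d‖ ≤ M := by
  rw [Matrix.l2_opNorm_def]
  apply ContinuousLinearMap.opNorm_le_bound _ hM
  intro x
  have h1 : ∀ j, (((Matrix.toEuclideanLin (𝕜 := ℝ) (m := n) (n := n)).trans
      LinearMap.toContinuousLinearMap (Matrix.diagonal d)) x) j = d j * x j := by
    intro j; rw [euclid_apply, Matrix.mulVec_diagonal]
  rw [EuclideanSpace.norm_eq, EuclideanSpace.norm_eq]
  have key : ∑ j, ‖(((Matrix.toEuclideanLin (𝕜 := ℝ) (m := n) (n := n)).trans
      LinearMap.toContinuousLinearMap (Matrix.diagonal d)) x) j‖ ^ 2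
      ≤ M ^ 2 * ∑ j, ‖x j‖ ^ 2 := by
    rw [Finset.mul_sum]
    apply Finset.sum_le_sum
    intro j _
    rw [h1 j]
    have := h j
    rw [Real.norm_eq_abs, Real.norm_eq_abs]
    nlinarith [abs_nonneg (d j * x j), abs_mul (d j) (x j), abs_nonneg (x j), abs_nonneg (d j), sq_abs (d j * x j), sq_abs (x j), sq_abs (d j), mul_le_mul_of_nonneg_right this (abs_nonneg (x j))]
  calc Real.sqrt (∑ j, ‖(((Matrix.toEuclideanLin (𝕜 := ℝ) (m := n) (n := n)).trans
      LinearMap.toContinuousLinearMap (Matrix.diagonal d)) x) j‖ ^ 2)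
      ≤ Real.sqrt (M ^ 2 * ∑ j, ‖x j‖ ^ 2) := Real.sqrt_le_sqrt key
    _ = M * Real.sqrt (∑ j, ‖x j‖ ^ 2) := by
        rw [Real.sqrt_mul (sq_nonneg M), Real.sqrt_sq hM]

lemma norm_mul3_le {p : Type*} [Fintype p] [DecidableEq p]
    (A : Matrix m n ℝ) (X : Matrix n l ℝ) (B : Matrix l p ℝ)
    (hA : ‖A‖ ≤ 1) (hB : ‖B‖ ≤ 1) : ‖A * X * B‖ ≤ ‖X‖ := by
  have h1 := Matrix.l2_opNorm_mul (A * X) B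
  have h2 := Matrix.l2_opNorm_mul A X
  have n1 : (0:ℝ) ≤ ‖A * X‖ := norm_nonneg _
  have n2 : (0:ℝ) ≤ ‖X‖ := norm_nonneg _
  have n3 : (0:ℝ) ≤ ‖B‖ := norm_nonneg _
  have n4 : (0:ℝ) ≤ ‖A‖ := norm_nonneg _
  nlinarith

lemma orth_conj_norm (A B X : Matrix n n ℝ) (hA : Aᵀ * A = 1) (hB : Bᵀ * B = 1) :
    ‖A * X * Bᵀ‖ = ‖X‖ := by
  have hA' : A * Aᵀ = 1 := mul_eq_one_comm.mp hA
  have hB' : B * Bᵀ = 1 := mul_eq_one_comm.mp hB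
  have nA : ‖A‖ ≤ 1 := orth_norm_le A hA
  have nB : ‖B‖ ≤ 1 := orth_norm_le B hB
  have nAt : ‖Aᵀ‖ ≤ 1 := by rw [my_norm_transpose]; exact nA
  have nBt : ‖Bᵀ‖ ≤ 1 := by rw [my_norm_transpose]; exact nB
  apply le_antisymm (norm_mul3_le A X Bᵀ nA nBt)
  have hX : Aᵀ * (A * X * Bᵀ) * B = X := by
    simp only [← Matrix.mul_assoc]
    rw [hA, Matrix.one_mul, Matrix.mul_assoc, hB, Matrix.mul_one]
  calc ‖X‖ = ‖Aᵀ * (A * X * Bᵀ) * B‖ := by rw [hX]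
    _ ≤ ‖A * X * Bᵀ‖ := norm_mul3_le _ _ _ nAt nB

lemma sq_eq_of_nonneg {a b : ℝ} (ha : 0 ≤ a) (hb : 0 ≤ b) (h : a * a = b * b) : a = b := by
  nlinarith

lemma full_basis {n K : ℕ} (hKn : K ≤ n) (tC : Matrix (Fin n) (Fin K) ℝ)
    (Q : Matrix (Fin n) (Fin (n - K)) ℝ)
    (hC : tCᵀ * tC = 1) (hQ : Qᵀ * Q = 1) (hCQ : tCᵀ * Q = 0) (hQC : Qᵀ * tC = 0) :
    tC * tCᵀ + Q * Qᵀ = 1 := by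
  set W : Matrix (Fin n) (Fin n) ℝ := tC * tCᵀ + Q * Qᵀ with hW
  have e1 : tC * tCᵀ * (tC * tCᵀ) = tC * tCᵀ := by
    rw [Matrix.mul_assoc, ← Matrix.mul_assoc tCᵀ, hC, Matrix.one_mul]
  have e2 : tC * tCᵀ * (Q * Qᵀ) = 0 := by
    rw [Matrix.mul_assoc, ← Matrix.mul_assoc tCᵀ, hCQ, Matrix.zero_mul, Matrix.mul_zero]
  have e3 : Q * Qᵀ * (tC * tCᵀ) = 0 := by
    rw [Matrix.mul_assoc, ← Matrix.mul_assoc Qᵀ, hQC, Matrix.zero_mul, Matrix.mul_zero]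
  have e4 : Q * Qᵀ * (Q * Qᵀ) = Q * Qᵀ := by
    rw [Matrix.mul_assoc, ← Matrix.mul_assoc Qᵀ, hQ, Matrix.one_mul]
  have hWW : W * W = W := by
    rw [hW, Matrix.add_mul, Matrix.mul_add, Matrix.mul_add, e1, e2, e3, e4]
    abel
  have hWt : Wᵀ = W := by rw [hW]; simp [Matrix.transpose_add, Matrix.transpose_mul]
  set E := (1 : Matrix (Fin n) (Fin n) ℝ) - W with hE
  have hEE : E * E = E := by
    have h0 : ((1 : Matrix (Fin n) (Fin n) ℝ) - W) * (1 - W) = 1 - W - W + W * W := by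
      noncomm_ring
    rw [hE, h0, hWW]; abel
  have hEt : Eᵀ = E := by rw [hE, Matrix.transpose_sub, Matrix.transpose_one, hWt]
  have htrE : Matrix.trace E = 0 := by
    rw [hE, Matrix.trace_sub, Matrix.trace_one, hW, Matrix.trace_add,
      Matrix.trace_mul_comm tC, Matrix.trace_mul_comm Q, hC, hQ,
      Matrix.trace_one, Matrix.trace_one]
    simp only [Fintype.card_fin]
    rw [Nat.cast_sub hKn]; ring
  have hzero : ∑ i, ∑ j, (E j i) ^ 2 = 0 := by
    have htE : Matrix.trace (Eᵀ * E) = 0 := by rw [hEt, hEE, htrE]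
    rw [← htE]
    simp [Matrix.trace, Matrix.mul_apply, Matrix.diag, sq, Matrix.transpose_apply]
  have hE0 : E = 0 := by
    ext i j
    have h1 := (Finset.sum_eq_zero_iff_of_nonneg
      (fun i _ => Finset.sum_nonneg (fun j _ => sq_nonneg (E j i)))).mp hzero j (Finset.mem_univ j)
    have h2 := (Finset.sum_eq_zero_iff_of_nonneg
      (fun k _ => sq_nonneg (E k j))).mp h1 i (Finset.mem_univ i)
    simpa using pow_eq_zero_iff (n := 2) (by norm_num) |>.mp h2
  have : (1 : Matrix (Fin n) (Fin n) ℝ) = W := sub_eq_zero.mp hE0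
  rw [hW] at this; exact this.symm


end Aux

set_option maxHeartbeats 2000000 in
/-- Lemma on the decomposition `U = C̃ v_u + Q z_u`: for matrices with
orthonormal columns `U, C̃` and `Q` an orthonormal basis of `ker C̃ᵀ`, if `U = C̃ v_u + Q z_u`
then `v_uᵀv_u + z_uᵀz_u = I_K`, and there is a constant `c > 1` depending only on `K` such
that, with `δ = ‖UUᵀ - C̃C̃ᵀ‖₂`, `‖z_u‖₂ ∈ [c⁻¹δ, cδ]` and `‖v_u - v‖₂ ∈ [c⁻¹δ², cδ²]`,
where `v = A_u B_uᵀ` for `A_u, B_u` the left and right singular-vector matrices of `v_u`. -/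
theorem stmt2 (K : ℕ) :
    ∃ c : ℝ, 1 < c ∧
      ∀ (n : ℕ) (U tC : Matrix (Fin n) (Fin K) ℝ) (Q : Matrix (Fin n) (Fin (n - K)) ℝ)
        (vu : Matrix (Fin K) (Fin K) ℝ) (zu : Matrix (Fin (n - K)) (Fin K) ℝ),
        Uᵀ * U = 1 → tCᵀ * tC = 1 → Qᵀ * Q = 1 → tCᵀ * Q = 0 →
        U = tC * vu + Q * zu →
        vuᵀ * vu + zuᵀ * zu = 1 ∧
        (∀ (Au Bu : Matrix (Fin K) (Fin K) ℝ) (Sv : Fin K → ℝ),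
          Auᵀ * Au = 1 → Buᵀ * Bu = 1 → (∀ i, 0 ≤ Sv i) →
          vu = Au * Matrix.diagonal Sv * Buᵀ →
          specNorm zu ∈ Set.Icc (c⁻¹ * specNorm (U * Uᵀ - tC * tCᵀ))
              (c * specNorm (U * Uᵀ - tC * tCᵀ)) ∧
          specNorm (vu - Au * Buᵀ) ∈ Set.Icc (c⁻¹ * specNorm (U * Uᵀ - tC * tCᵀ) ^ 2)
              (c * specNorm (U * Uᵀ - tC * tCᵀ) ^ 2)) := by
  refine ⟨8, by norm_num, ?_⟩
  intro n U tC Q vu zu hU hC hQ hCQ hdec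
  simp only [specNorm_eq_l2]
  have hQC : Qᵀ * tC = 0 := by
    have h := congrArg Matrix.transpose hCQ
    rw [Matrix.transpose_mul, Matrix.transpose_transpose, Matrix.transpose_zero] at h
    exact h
  have hCtU : tCᵀ * U = vu := by
    rw [hdec, Matrix.mul_add, ← Matrix.mul_assoc, ← Matrix.mul_assoc, hC, hCQ,
      Matrix.one_mul, Matrix.zero_mul, add_zero]
  have hQtU : Qᵀ * U = zu := by
    rw [hdec, Matrix.mul_add, ← Matrix.mul_assoc, ← Matrix.mul_assoc, hQC, hQ,
      Matrix.zero_mul, Matrix.one_mul, zero_add]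
  have hUtC : Uᵀ * tC = vuᵀ := by
    have h := congrArg Matrix.transpose hCtU
    rw [Matrix.transpose_mul, Matrix.transpose_transpose] at h
    exact h
  have hUtQ : Uᵀ * Q = zuᵀ := by
    have h := congrArg Matrix.transpose hQtU
    rw [Matrix.transpose_mul, Matrix.transpose_transpose] at h
    exact h
  have h1 : vuᵀ * vu + zuᵀ * zu = 1 := by
    have e : Uᵀ * U = vuᵀ * vu + zuᵀ * zu := by
      nth_rewrite 2 [hdec]
      rw [Matrix.mul_add, ← Matrix.mul_assoc, ← Matrix.mul_assoc, hUtC, hUtQ]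
    rw [← e, hU]
  refine ⟨h1, ?_⟩
  intro Au Bu Sv hAA hBB hSv hsvd
  -- K ≤ n
  have hKn : K ≤ n := by
    have hr1 := Matrix.rank_mul_le_right Uᵀ U
    rw [hU, Matrix.rank_one] at hr1
    have hr2 := Matrix.rank_le_card_height U
    simp only [Fintype.card_fin] at hr1 hr2
    omega
  have hFull : tC * tCᵀ + Q * Qᵀ = 1 := full_basis hKn tC Q hC hQ hCQ hQC
  -- norm facts
  have nU : ‖U‖ ≤ 1 := orth_norm_le U hU
  have nC : ‖tC‖ ≤ 1 := orth_norm_le tC hC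
  have nQ : ‖Q‖ ≤ 1 := orth_norm_le Q hQ
  have nUt : ‖Uᵀ‖ ≤ 1 := by rw [my_norm_transpose]; exact nU
  have nCt : ‖tCᵀ‖ ≤ 1 := by rw [my_norm_transpose]; exact nC
  have nQt : ‖Qᵀ‖ ≤ 1 := by rw [my_norm_transpose]; exact nQ
  set dl : ℝ := ‖U * Uᵀ - tC * tCᵀ‖ with hdl
  have hdl0 : 0 ≤ dl := norm_nonneg _
  -- SVD facts
  have hAAr : Au * Auᵀ = 1 := mul_eq_one_comm.mp hAA
  have hBBr : Bu * Buᵀ = 1 := mul_eq_one_comm.mp hBB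
  have hvvT : vu * vuᵀ = Au * Matrix.diagonal (fun i => Sv i * Sv i) * Auᵀ := by
    rw [hsvd]
    rw [Matrix.transpose_mul, Matrix.transpose_mul, Matrix.transpose_transpose,
      Matrix.diagonal_transpose]
    calc Au * Matrix.diagonal Sv * Buᵀ * (Bu * (Matrix.diagonal Sv * Auᵀ))
        = Au * Matrix.diagonal Sv * (Buᵀ * Bu) * (Matrix.diagonal Sv * Auᵀ) := by
          simp only [Matrix.mul_assoc]
      _ = Au * (Matrix.diagonal Sv * Matrix.diagonal Sv) * Auᵀ := by
          rw [hBB, Matrix.mul_one]; simp only [Matrix.mul_assoc]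
      _ = Au * Matrix.diagonal (fun i => Sv i * Sv i) * Auᵀ := by
          rw [Matrix.diagonal_mul_diagonal]
  have hvTv : vuᵀ * vu = Bu * Matrix.diagonal (fun i => Sv i * Sv i) * Buᵀ := by
    rw [hsvd]
    rw [Matrix.transpose_mul, Matrix.transpose_mul, Matrix.transpose_transpose,
      Matrix.diagonal_transpose]
    calc Bu * (Matrix.diagonal Sv * Auᵀ) * (Au * Matrix.diagonal Sv * Buᵀ)
        = Bu * Matrix.diagonal Sv * (Auᵀ * Au) * (Matrix.diagonal Sv * Buᵀ) := by
          simp only [Matrix.mul_assoc]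
      _ = Bu * (Matrix.diagonal Sv * Matrix.diagonal Sv) * Buᵀ := by
          rw [hAA, Matrix.mul_one]; simp only [Matrix.mul_assoc]
      _ = Bu * Matrix.diagonal (fun i => Sv i * Sv i) * Buᵀ := by
          rw [Matrix.diagonal_mul_diagonal]
  have hone_minus : ∀ (M : Matrix (Fin K) (Fin K) ℝ), M * Mᵀ = 1 →
      (1 : Matrix (Fin K) (Fin K) ℝ) - M * Matrix.diagonal (fun i => Sv i * Sv i) * Mᵀ
      = M * Matrix.diagonal (fun i => 1 - Sv i * Sv i) * Mᵀ := by
    intro M hM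
    have e0 : Matrix.diagonal (fun i : Fin K => 1 - Sv i * Sv i)
        = 1 - Matrix.diagonal (fun i => Sv i * Sv i) := by
      rw [← Matrix.diagonal_one, Matrix.diagonal_sub]
    rw [e0, Matrix.mul_sub, Matrix.sub_mul, Matrix.mul_one, hM]
  have hztz : zuᵀ * zu = 1 - vuᵀ * vu := eq_sub_of_add_eq' h1
  set t2 : ℝ := ‖Matrix.diagonal (fun i : Fin K => 1 - Sv i * Sv i)‖ with ht2
  have hnzu2 : ‖zu‖ * ‖zu‖ = t2 := by
    rw [← my_norm_tmul, hztz, hvTv, hone_minus Bu hBBr, ht2, orth_conj_norm Bu Bu _ hBB hBB]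
  -- Sv i ≤ 1
  have hvu1 : ‖vu‖ ≤ 1 := by
    rw [← hCtU]
    calc ‖tCᵀ * U‖ ≤ ‖tCᵀ‖ * ‖U‖ := Matrix.l2_opNorm_mul _ _
      _ ≤ 1 := by nlinarith [norm_nonneg (E := Matrix (Fin K) (Fin n) ℝ) tCᵀ,
          norm_nonneg (E := Matrix (Fin n) (Fin K) ℝ) U]
  have hSle1 : ∀ i, Sv i ≤ 1 := by
    intro i
    have hd : ‖Matrix.diagonal Sv‖ = ‖vu‖ := by
      rw [hsvd, orth_conj_norm Au Bu _ hAA hBB]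
    have := le_diag_norm Sv i
    rw [hd] at this
    have := abs_le.mp (le_trans this hvu1)
    exact this.2
  -- upper bound for zu
  have hQzu : ‖Q * zu‖ = ‖zu‖ := by
    have e : (Q * zu)ᵀ * (Q * zu) = zuᵀ * zu := by
      rw [Matrix.transpose_mul, Matrix.mul_assoc, ← Matrix.mul_assoc Qᵀ, hQ, Matrix.one_mul]
    apply sq_eq_of_nonneg (norm_nonneg _) (norm_nonneg _)
    rw [← my_norm_tmul, ← my_norm_tmul, e]
  have hDU : (U * Uᵀ - tC * tCᵀ) * U = Q * zu := by
    rw [Matrix.sub_mul, Matrix.mul_assoc, Matrix.mul_assoc, hU, hCtU, Matrix.mul_one, hdec]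
    abel
  have hzu_le : ‖zu‖ ≤ dl := by
    rw [← hQzu, ← hDU]
    calc ‖(U * Uᵀ - tC * tCᵀ) * U‖ ≤ ‖U * Uᵀ - tC * tCᵀ‖ * ‖U‖ := Matrix.l2_opNorm_mul _ _
      _ ≤ dl := by rw [← hdl]; nlinarith
  -- lower bound for zu
  have hQQ1 : Q * Qᵀ = 1 - tC * tCᵀ := eq_sub_of_add_eq' hFull
  have hsplit : U * Uᵀ - tC * tCᵀ
      = (U * Uᵀ) * (Q * Qᵀ) - (1 - U * Uᵀ) * (tC * tCᵀ) := by
    rw [hQQ1]; noncomm_ring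
  have hterm1 : ‖(U * Uᵀ) * (Q * Qᵀ)‖ ≤ ‖zu‖ := by
    have e : (U * Uᵀ) * (Q * Qᵀ) = U * zuᵀ * Qᵀ := by
      rw [Matrix.mul_assoc, ← Matrix.mul_assoc Uᵀ, hUtQ, ← Matrix.mul_assoc]
    rw [e]
    have := norm_mul3_le U zuᵀ Qᵀ nU nQt
    rw [my_norm_transpose] at this
    exact this
  have hPidem : (U * Uᵀ) * (U * Uᵀ) = U * Uᵀ := by
    rw [Matrix.mul_assoc, ← Matrix.mul_assoc Uᵀ, hU, Matrix.one_mul]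
  have hterm2 : ‖(1 - U * Uᵀ) * (tC * tCᵀ)‖ ≤ ‖zu‖ := by
    have hMtC : ‖(1 - U * Uᵀ) * tC‖ = ‖zu‖ := by
      apply sq_eq_of_nonneg (norm_nonneg _) (norm_nonneg _)
      have e : ((1 - U * Uᵀ) * tC)ᵀ * ((1 - U * Uᵀ) * tC) = 1 - vu * vuᵀ := by
        have hPt : (1 - U * Uᵀ)ᵀ = 1 - U * Uᵀ := by
          rw [Matrix.transpose_sub, Matrix.transpose_one, Matrix.transpose_mul,
            Matrix.transpose_transpose]
        have hPP : (1 - U * Uᵀ) * (1 - U * Uᵀ) = 1 - U * Uᵀ := by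
          have h0 : ((1:Matrix (Fin n) (Fin n) ℝ) - U * Uᵀ) * (1 - U * Uᵀ)
              = 1 - U * Uᵀ - U * Uᵀ + (U * Uᵀ) * (U * Uᵀ) := by noncomm_ring
          rw [h0, hPidem]; abel
        rw [Matrix.transpose_mul, hPt, Matrix.mul_assoc, ← Matrix.mul_assoc (1 - U * Uᵀ), hPP]
        rw [Matrix.sub_mul, Matrix.one_mul, Matrix.mul_sub, hC]
        congr 1
        rw [Matrix.mul_assoc U Uᵀ tC, hUtC, ← Matrix.mul_assoc, hCtU]
      rw [← my_norm_tmul, e, hvvT, hone_minus Au hAAr, orth_conj_norm Au Au _ hAA hAA, ← ht2]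
      exact hnzu2.symm
    calc ‖(1 - U * Uᵀ) * (tC * tCᵀ)‖ = ‖((1 - U * Uᵀ) * tC) * tCᵀ‖ := by
          rw [Matrix.mul_assoc]
      _ ≤ ‖(1 - U * Uᵀ) * tC‖ * ‖tCᵀ‖ := Matrix.l2_opNorm_mul _ _
      _ ≤ ‖zu‖ := by rw [hMtC]; nlinarith [norm_nonneg (E := Matrix (Fin (n-K)) (Fin K) ℝ) zu]
  have hdl_le : dl ≤ 2 * ‖zu‖ := by
    rw [hdl, hsplit]
    calc ‖(U * Uᵀ) * (Q * Qᵀ) - (1 - U * Uᵀ) * (tC * tCᵀ)‖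
        ≤ ‖(U * Uᵀ) * (Q * Qᵀ)‖ + ‖(1 - U * Uᵀ) * (tC * tCᵀ)‖ := norm_sub_le _ _
      _ ≤ 2 * ‖zu‖ := by linarith
  have hzu0 : (0:ℝ) ≤ ‖zu‖ := norm_nonneg _
  constructor
  · constructor
    · rw [show ((8:ℝ))⁻¹ * dl = dl / 8 by ring]; linarith
    · linarith
  -- v part
  have hvdiff : ‖vu - Au * Buᵀ‖ = ‖Matrix.diagonal (fun i : Fin K => Sv i - 1)‖ := by
    have e : vu - Au * Buᵀ = Au * Matrix.diagonal (fun i : Fin K => Sv i - 1) * Buᵀ := by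
      rw [hsvd]
      have e0 : Matrix.diagonal (fun i : Fin K => Sv i - 1)
          = Matrix.diagonal Sv - 1 := by rw [← Matrix.diagonal_one, Matrix.diagonal_sub]
      rw [e0, Matrix.mul_sub, Matrix.sub_mul, Matrix.mul_one]
    rw [e, orth_conj_norm Au Bu _ hAA hBB]
  set t1 : ℝ := ‖Matrix.diagonal (fun i : Fin K => Sv i - 1)‖ with ht1
  have ht10 : (0:ℝ) ≤ t1 := norm_nonneg _
  have ht20 : (0:ℝ) ≤ t2 := norm_nonneg _
  have ht1le : t1 ≤ t2 := by
    rw [ht1]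
    apply diag_norm_le _ _ ht20
    intro i
    have hlow := le_diag_norm (fun i : Fin K => 1 - Sv i * Sv i) i
    rw [← ht2] at hlow
    have h0 := hSv i
    have h1i := hSle1 i
    have habs : |(fun i : Fin K => 1 - Sv i * Sv i) i| = 1 - Sv i * Sv i := by
      simp only; exact abs_of_nonneg (by nlinarith)
    rw [habs] at hlow
    have : |Sv i - 1| = 1 - Sv i := by rw [abs_of_nonpos (by linarith)]; ring
    rw [this]
    nlinarith
  have ht2le : t2 ≤ 2 * t1 := by
    rw [ht2]
    apply diag_norm_le _ _ (by linarith)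
    intro i
    have hlow := le_diag_norm (fun i : Fin K => Sv i - 1) i
    rw [← ht1] at hlow
    have h0 := hSv i
    have h1i := hSle1 i
    have habs : |(fun i : Fin K => Sv i - 1) i| = 1 - Sv i := by
      simp only; rw [abs_of_nonpos (by linarith)]; ring
    rw [habs] at hlow
    have : |1 - Sv i * Sv i| = 1 - Sv i * Sv i := abs_of_nonneg (by nlinarith)
    rw [this]
    nlinarith
  rw [hvdiff]
  constructor
  · rw [show ((8:ℝ))⁻¹ * dl ^ 2 = dl ^ 2 / 8 by ring]
    nlinarith
  · nlinarith
end

section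
/- Let $\Psi$ be a six-times continuously differentiable cumulative distribution function such that for constants $c,m,M>0$: (i) $\Psi(-x)=1-\Psi(x)$ and $|\Psi^{(j)}(x)|\leq c$ for all $x$ and $j\in[6]$; (ii) $|x|^m\Psi(x)\geq c^{-1}$ for all $x<-M$; (iii) $|x|^m|\Psi^{(j)}(x)|\leq c$ for $j\in[6]$ and all $|x|>M$. Let $\phi$ denote the standard normal density and define, for $\sigma\in(s^{-1},s)$ with $s>1$ fixed, $\mu(x,\sigma)=\log\{\int \Psi(x+\sigma e)\phi(e)\,de\}$. Then there is a constant $\tilde{c}$ such that all partial derivatives $\partial^{i+j}\mu/\partial x^i \partial\sigma^j$ with $i+j\in\{1,2,3\}$ are uniformly bounded in absolute value by $\tilde{c}$ on $\mathbb{R}\times(s^{-1},s)$. -/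
/-!
Write `G k a x σ = ∫ Ψ⁽ᵏ⁾(x + σe) eᵃ φ(e) de`. Differentiating under the integral sign,
`∂ₓ G k a = G (k+1) a` and `∂_σ G k a = G (k+1) (a+1)`, so by the quotient rule every partial
derivative of `μ = log (G 0 0)` of order `n ≥ 1` is a polynomial in the ratios `G k a / G 0 0`
with `1 ≤ k ≤ n`. Each such ratio is bounded on `ℝ × [0, s]`: the polynomial decay of `Ψ⁽ᵏ⁾`
passes to `G k a` by Peetre's inequality, so `|G k a x σ| ≲ (1 + |x|)⁻ᵐ`, while monotonicity gives
`G 0 0 x σ ≥ Ψ x / 2`, and the tail assumption gives `Ψ x ≳ (1 + |x|)⁻ᵐ`.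
-/

open MeasureTheory Real Filter
open scoped BigOperators Topology

noncomputable def stdGaussianPDF (e : ℝ) : ℝ :=
  Real.exp (-(e ^ 2) / 2) / Real.sqrt (2 * Real.pi)

/-- `μ(x,σ) = log ∫ Ψ(x + σe) φ(e) de`. -/
noncomputable def logMissProb (Ψ : ℝ → ℝ) (x σ : ℝ) : ℝ :=
  Real.log (∫ e, Ψ (x + σ * e) * stdGaussianPDF e)

open Set

lemma stdGaussianPDF_pos (e : ℝ) : 0 < stdGaussianPDF e := by
  unfold stdGaussianPDF; positivity

@[fun_prop]
lemma continuous_stdGaussianPDF : Continuous stdGaussianPDF := by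
  unfold stdGaussianPDF; fun_prop

lemma exp_mul_abs_mul_stdGaussianPDF_le (b e : ℝ) :
    exp (b * |e|) * stdGaussianPDF e ≤ exp (b ^ 2) * exp (-(1 / 4) * e ^ 2) := by
  have hsqrt : 1 ≤ √(2 * π) := Real.one_le_sqrt.2 (by linarith [pi_gt_three])
  calc exp (b * |e|) * stdGaussianPDF e ≤ exp (b * |e|) * exp (-(e ^ 2) / 2) := by
        unfold stdGaussianPDF
        gcongr
        exact div_le_self (exp_pos _).le hsqrt
    _ = exp (b * |e| - e ^ 2 / 2) := by rw [← exp_add]; ring_nf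
    _ ≤ exp (b ^ 2 + -(1 / 4) * e ^ 2) := by
        gcongr
        nlinarith [sq_nonneg (|e| - 2 * b), sq_abs e]
    _ = exp (b ^ 2) * exp (-(1 / 4) * e ^ 2) := exp_add _ _

lemma integrable_exp_mul_abs_mul_stdGaussianPDF (b : ℝ) :
    Integrable fun e => exp (b * |e|) * stdGaussianPDF e := by
  refine ((integrable_exp_neg_mul_sq (by norm_num : (0:ℝ) < 1 / 4)).const_mul (exp (b ^ 2))).mono'
    (by fun_prop : Continuous _).aestronglyMeasurable (ae_of_all _ fun e => ?_)
  rw [Real.norm_of_nonneg (by positivity [stdGaussianPDF_pos e])]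
  exact exp_mul_abs_mul_stdGaussianPDF_le b e

lemma pow_abs_le_factorial_mul_exp (a : ℕ) (e : ℝ) : |e| ^ a ≤ a.factorial * exp |e| := by
  have := pow_div_factorial_le_exp |e| (abs_nonneg e) a
  rwa [div_le_iff₀ (by positivity), mul_comm] at this

lemma norm_mul_pow_mul_stdGaussianPDF_le {y C : ℝ} (hy : |y| ≤ C) (a : ℕ) (e : ℝ) :
    ‖y * e ^ a * stdGaussianPDF e‖ ≤ C * a.factorial * (exp (1 * |e|) * stdGaussianPDF e) := by
  have hφ := (stdGaussianPDF_pos e).le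
  rw [Real.norm_eq_abs, abs_mul, abs_mul, abs_pow, abs_of_nonneg hφ, one_mul]
  calc |y| * |e| ^ a * stdGaussianPDF e ≤ C * (a.factorial * exp |e|) * stdGaussianPDF e := by
        gcongr
        · exact (abs_nonneg y).trans hy
        · exact pow_abs_le_factorial_mul_exp a e
    _ = C * a.factorial * (exp |e| * stdGaussianPDF e) := by ring

noncomputable def gaussMoment (f : ℝ → ℝ) (a : ℕ) (x σ : ℝ) : ℝ :=
  ∫ e, f (x + σ * e) * e ^ a * stdGaussianPDF e

section gaussMoment

variable {f f' : ℝ → ℝ} {C C' : ℝ}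

lemma integrable_gaussMoment_integrand (hf : Continuous f) (hC : ∀ t, |f t| ≤ C)
    (a : ℕ) (x σ : ℝ) : Integrable fun e => f (x + σ * e) * e ^ a * stdGaussianPDF e :=
  ((integrable_exp_mul_abs_mul_stdGaussianPDF 1).const_mul _).mono'
    (by fun_prop : Continuous _).aestronglyMeasurable
    (ae_of_all _ fun e => norm_mul_pow_mul_stdGaussianPDF_le (hC _) a e)

lemma hasDerivAt_gaussMoment_fst (hf : ∀ t, HasDerivAt f (f' t) t) (hf' : Continuous f')
    (hC : ∀ t, |f t| ≤ C) (hC' : ∀ t, |f' t| ≤ C') (a : ℕ) (x σ : ℝ) :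
    HasDerivAt (fun y => gaussMoment f a y σ) (gaussMoment f' a x σ) x := by
  have hfc : Continuous f := continuous_iff_continuousAt.2 fun t => (hf t).continuousAt
  refine (hasDerivAt_integral_of_dominated_loc_of_deriv_le univ_mem
    (F' := fun y e => f' (y + σ * e) * e ^ a * stdGaussianPDF e)
    (Eventually.of_forall fun y => (by fun_prop : Continuous _).aestronglyMeasurable)
    (integrable_gaussMoment_integrand hfc hC a x σ)
    (by fun_prop : Continuous _).aestronglyMeasurable
    (ae_of_all _ fun e y _ => norm_mul_pow_mul_stdGaussianPDF_le (hC' _) a e)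
    ((integrable_exp_mul_abs_mul_stdGaussianPDF 1).const_mul _)
    (ae_of_all _ fun e y _ => ?_)).2
  have := ((hf (y + σ * e)).comp y ((hasDerivAt_id y).add_const (σ * e))).mul_const (e ^ a)
  simpa using this.mul_const (stdGaussianPDF e)

lemma hasDerivAt_gaussMoment_snd (hf : ∀ t, HasDerivAt f (f' t) t) (hf' : Continuous f')
    (hC : ∀ t, |f t| ≤ C) (hC' : ∀ t, |f' t| ≤ C') (a : ℕ) (x σ : ℝ) :
    HasDerivAt (fun τ => gaussMoment f a x τ) (gaussMoment f' (a + 1) x σ) σ := by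
  have hfc : Continuous f := continuous_iff_continuousAt.2 fun t => (hf t).continuousAt
  refine (hasDerivAt_integral_of_dominated_loc_of_deriv_le univ_mem
    (F' := fun τ e => f' (x + τ * e) * e ^ (a + 1) * stdGaussianPDF e)
    (Eventually.of_forall fun τ => (by fun_prop : Continuous _).aestronglyMeasurable)
    (integrable_gaussMoment_integrand hfc hC a x σ)
    (by fun_prop : Continuous _).aestronglyMeasurable
    (ae_of_all _ fun e τ _ => norm_mul_pow_mul_stdGaussianPDF_le (hC' _) (a + 1) e)
    ((integrable_exp_mul_abs_mul_stdGaussianPDF 1).const_mul _)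
    (ae_of_all _ fun e τ _ => ?_)).2
  have := ((hf (x + τ * e)).comp τ (((hasDerivAt_id τ).mul_const e).const_add x)).mul_const (e ^ a)
  exact (this.mul_const (stdGaussianPDF e)).congr_deriv (by ring)

lemma gaussMoment_zero_pos (hf : Continuous f) (hpos : ∀ t, 0 < f t) (hC : ∀ t, |f t| ≤ C)
    (x σ : ℝ) : 0 < gaussMoment f 0 x σ :=
  integral_pos_of_integrable_nonneg_nonzero (x := 0) (by fun_prop)
    (integrable_gaussMoment_integrand hf hC 0 x σ)
    (fun e => by positivity [hpos (x + σ * e), stdGaussianPDF_pos e])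
    (by positivity [hpos (x + σ * 0), stdGaussianPDF_pos 0])

lemma setIntegral_Ici_stdGaussianPDF : ∫ e in Ici 0, stdGaussianPDF e = 1 / 2 := by
  have h : ∀ e, stdGaussianPDF e = exp (-(1 / 2) * e ^ 2) / √(2 * π) := fun e => by
    unfold stdGaussianPDF; ring_nf
  simp_rw [integral_Ici_eq_integral_Ioi, h, integral_div, integral_gaussian_Ioi,
    show π / (1 / 2) = 2 * π by ring]
  field_simp

/-- Half of the Gaussian mass lies where `σ e ≥ 0`, and there `f (x + σ e) ≥ f x`. -/
lemma half_mul_le_gaussMoment_zero (hf : Continuous f) (hmono : Monotone f) (hf0 : ∀ t, 0 ≤ f t)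
    (hC : ∀ t, |f t| ≤ C) (x : ℝ) {σ : ℝ} (hσ : 0 ≤ σ) :
    f x / 2 ≤ gaussMoment f 0 x σ := by
  have hint := integrable_gaussMoment_integrand hf hC 0 x σ
  have hφ : Integrable stdGaussianPDF := by
    simpa using integrable_exp_mul_abs_mul_stdGaussianPDF 0
  calc f x / 2 = ∫ e in Ici 0, f x * stdGaussianPDF e := by
        rw [integral_const_mul, setIntegral_Ici_stdGaussianPDF]; ring
    _ ≤ ∫ e in Ici 0, f (x + σ * e) * e ^ 0 * stdGaussianPDF e := by
        refine setIntegral_mono_on (hφ.const_mul _).integrableOn hint.integrableOn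
          measurableSet_Ici fun e he => ?_
        rw [pow_zero, mul_one]
        gcongr
        · exact (stdGaussianPDF_pos e).le
        · exact hmono (le_add_of_nonneg_right (mul_nonneg hσ he))
    _ ≤ gaussMoment f 0 x σ :=
        setIntegral_le_integral hint (ae_of_all _ fun e => by
          positivity [hf0 (x + σ * e), stdGaussianPDF_pos e])

end gaussMoment

lemma one_add_abs_le_mul (x y : ℝ) : 1 + |x| ≤ (1 + |x + y|) * (1 + |y|) := by
  have : |x| ≤ |x + y| + |y| := by simpa using abs_sub (x + y) y
  nlinarith [abs_nonneg (x + y), abs_nonneg y]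

lemma integrable_one_add_mul_abs_rpow_mul_stdGaussianPDF {s m : ℝ} (hs : 0 ≤ s) (hm : 0 ≤ m)
    (a : ℕ) : Integrable fun e => (1 + s * |e|) ^ m * |e| ^ a * stdGaussianPDF e := by
  refine ((integrable_exp_mul_abs_mul_stdGaussianPDF (m * s + 1)).const_mul a.factorial).mono'
    (by fun_prop (disch := intro; positivity)) (ae_of_all _ fun e => ?_)
  have hφ := (stdGaussianPDF_pos e).le
  have hpow : (1 + s * |e|) ^ m ≤ exp (m * s * |e|) := by
    calc (1 + s * |e|) ^ m ≤ exp (s * |e|) ^ m := by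
          gcongr; linarith [add_one_le_exp (s * |e|)]
      _ = exp (m * s * |e|) := by rw [← exp_mul]; ring_nf
  rw [Real.norm_of_nonneg (by positivity)]
  calc (1 + s * |e|) ^ m * |e| ^ a * stdGaussianPDF e
      ≤ exp (m * s * |e|) * (a.factorial * exp |e|) * stdGaussianPDF e := by
        gcongr; exact pow_abs_le_factorial_mul_exp a e
    _ = a.factorial * (exp ((m * s + 1) * |e|) * stdGaussianPDF e) := by
        rw [add_mul, one_mul, exp_add]; ring

lemma one_add_abs_rpow_mul_abs_gaussMoment_le {f : ℝ → ℝ} {m K s : ℝ} (hm : 0 ≤ m)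
    (hK : ∀ t, (1 + |t|) ^ m * |f t| ≤ K) (a : ℕ) (x : ℝ) {σ : ℝ} (hσ : |σ| ≤ s) :
    (1 + |x|) ^ m * |gaussMoment f a x σ| ≤
      K * ∫ e, (1 + s * |e|) ^ m * |e| ^ a * stdGaussianPDF e := by
  have hs : 0 ≤ s := (abs_nonneg σ).trans hσ
  rw [← abs_of_nonneg (by positivity : (0:ℝ) ≤ (1 + |x|) ^ m), ← abs_mul, gaussMoment,
    ← integral_const_mul, ← integral_const_mul, ← Real.norm_eq_abs]
  refine norm_integral_le_of_norm_le
    ((integrable_one_add_mul_abs_rpow_mul_stdGaussianPDF hs hm a).const_mul K)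
    (ae_of_all _ fun e => ?_)
  have hφ := (stdGaussianPDF_pos e).le
  have hpeetre : (1 + |x|) ^ m ≤ (1 + |x + σ * e|) ^ m * (1 + s * |e|) ^ m := by
    rw [← mul_rpow (by positivity) (by positivity)]
    gcongr
    calc 1 + |x| ≤ (1 + |x + σ * e|) * (1 + |σ * e|) := one_add_abs_le_mul x (σ * e)
      _ ≤ (1 + |x + σ * e|) * (1 + s * |e|) := by
          rw [abs_mul]; gcongr
  rw [Real.norm_eq_abs, abs_mul, abs_mul, abs_mul, abs_pow, abs_of_nonneg hφ,
    abs_of_nonneg (by positivity : (0:ℝ) ≤ (1 + |x|) ^ m)]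
  calc (1 + |x|) ^ m * (|f (x + σ * e)| * |e| ^ a * stdGaussianPDF e)
      ≤ (1 + |x + σ * e|) ^ m * (1 + s * |e|) ^ m
          * (|f (x + σ * e)| * |e| ^ a * stdGaussianPDF e) := by gcongr
    _ = (1 + |x + σ * e|) ^ m * |f (x + σ * e)| * ((1 + s * |e|) ^ m * |e| ^ a
          * stdGaussianPDF e) := by ring
    _ ≤ K * ((1 + s * |e|) ^ m * |e| ^ a * stdGaussianPDF e) := by gcongr; exact hK _

lemma abs_gaussMoment_div_gaussMoment_le {f g : ℝ → ℝ} {m K κ s C : ℝ} (hm : 0 ≤ m)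
    (hK : ∀ t, (1 + |t|) ^ m * |f t| ≤ K) (hg : Continuous g) (hmono : Monotone g)
    (hgC : ∀ t, |g t| ≤ C) (hκ : 0 < κ) (hgκ : ∀ t, κ ≤ (1 + |t|) ^ m * g t)
    (a : ℕ) (x : ℝ) {σ : ℝ} (hσ : 0 ≤ σ) (hσs : σ ≤ s) :
    |gaussMoment f a x σ / gaussMoment g 0 x σ| ≤
      2 * (K * ∫ e, (1 + s * |e|) ^ m * |e| ^ a * stdGaussianPDF e) / κ := by
  have hg0 : ∀ t, 0 ≤ g t := fun t =>
    (pos_of_mul_pos_right (hκ.trans_le (hgκ t)) (by positivity)).le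
  have hw : 0 < (1 + |x|) ^ m := by positivity
  have hN := one_add_abs_rpow_mul_abs_gaussMoment_le hm hK a x (s := s)
    (by rwa [abs_of_nonneg hσ])
  have hD : κ / 2 ≤ (1 + |x|) ^ m * gaussMoment g 0 x σ := by
    calc κ / 2 ≤ (1 + |x|) ^ m * (g x / 2) := by linarith [hgκ x]
      _ ≤ _ := by gcongr; exact half_mul_le_gaussMoment_zero hg hmono hg0 hgC x hσ
  have hDpos : 0 < gaussMoment g 0 x σ := pos_of_mul_pos_right (by linarith) hw.le
  calc |gaussMoment f a x σ / gaussMoment g 0 x σ|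
      = (1 + |x|) ^ m * |gaussMoment f a x σ| / ((1 + |x|) ^ m * gaussMoment g 0 x σ) := by
        rw [abs_div, abs_of_pos hDpos, mul_div_mul_left _ _ hw.ne']
    _ ≤ (K * ∫ e, (1 + s * |e|) ^ m * |e| ^ a * stdGaussianPDF e) / (κ / 2) :=
        div_le_div₀ ((by positivity : (0:ℝ) ≤ (1 + |x|) ^ m * |gaussMoment f a x σ|).trans hN)
          hN (by positivity) hD
    _ = _ := by ring

lemma exists_one_add_abs_rpow_mul_abs_le {f : ℝ → ℝ} {c m M : ℝ} (hM : 0 < M) (hm : 0 ≤ m)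
    (hc : ∀ t, |f t| ≤ c) (htail : ∀ t, M < |t| → |t| ^ m * |f t| ≤ c) :
    ∃ K, ∀ t, (1 + |t|) ^ m * |f t| ≤ K := by
  refine ⟨max ((1 + M) ^ m) ((1 + M⁻¹) ^ m) * c, fun t => ?_⟩
  rcases le_or_gt |t| M with ht | ht
  · calc (1 + |t|) ^ m * |f t| ≤ (1 + M) ^ m * c := by gcongr; exact hc t
      _ ≤ _ := by gcongr; exacts [(abs_nonneg _).trans (hc t), le_max_left _ _]
  · have hlin : 1 + |t| ≤ (1 + M⁻¹) * |t| := by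
      have : 1 ≤ M⁻¹ * |t| := by rw [inv_mul_eq_div, one_le_div hM]; exact ht.le
      linarith
    calc (1 + |t|) ^ m * |f t| ≤ (1 + M⁻¹) ^ m * (|t| ^ m * |f t|) := by
          rw [← mul_assoc, ← mul_rpow (by positivity) (abs_nonneg t)]; gcongr
      _ ≤ (1 + M⁻¹) ^ m * c := by gcongr; exact htail t ht
      _ ≤ _ := by gcongr; exacts [(abs_nonneg _).trans (hc t), le_max_right _ _]

lemma exists_pos_le_one_add_abs_rpow_mul {Ψ : ℝ → ℝ} {c m M : ℝ} (hc : 0 < c) (hm : 0 ≤ m)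
    (hmono : Monotone Ψ) (htail : ∀ t, t < -M → c⁻¹ ≤ |t| ^ m * Ψ t) :
    ∃ κ, 0 < κ ∧ ∀ t, κ ≤ (1 + |t|) ^ m * Ψ t := by
  have hΨ_tail : ∀ t, t < -M → 0 < Ψ t := fun t ht =>
    pos_of_mul_pos_right ((inv_pos.2 hc).trans_le (htail t ht)) (by positivity)
  have hM : 0 < Ψ (-(M + 1)) := hΨ_tail _ (by linarith)
  refine ⟨min c⁻¹ (Ψ (-(M + 1))), lt_min (inv_pos.2 hc) hM, fun t => ?_⟩
  rcases lt_or_ge t (-(M + 1)) with ht | ht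
  · calc min c⁻¹ (Ψ (-(M + 1))) ≤ |t| ^ m * Ψ t := (min_le_left _ _).trans (htail t (by linarith))
      _ ≤ (1 + |t|) ^ m * Ψ t := by gcongr; exacts [(hΨ_tail t (by linarith)).le, by linarith]
  · calc min c⁻¹ (Ψ (-(M + 1))) ≤ 1 * Ψ t := by
          rw [one_mul]; exact (min_le_right _ _).trans (hmono ht)
      _ ≤ (1 + |t|) ^ m * Ψ t := by
          gcongr
          · exact hM.le.trans (hmono ht)
          · exact one_le_rpow (by linarith [abs_nonneg t]) hm

lemma hasDerivAt_iteratedDeriv {Ψ : ℝ → ℝ} {n k : ℕ} (hΨ : ContDiff ℝ n Ψ) (hk : k < n) (t : ℝ) :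
    HasDerivAt (iteratedDeriv k Ψ) (iteratedDeriv (k + 1) Ψ t) t := by
  rw [iteratedDeriv_succ]
  exact (hΨ.differentiable_iteratedDeriv k (by exact_mod_cast hk) t).hasDerivAt

noncomputable def momentRatio (Ψ : ℝ → ℝ) (k a : ℕ) (x σ : ℝ) : ℝ :=
  gaussMoment (iteratedDeriv k Ψ) a x σ / gaussMoment Ψ 0 x σ

section momentRatio

variable {Ψ : ℝ → ℝ} {N : ℕ} (hΨ : ContDiff ℝ N Ψ)
  (hB : ∀ k ≤ N, ∃ B, ∀ t, |iteratedDeriv k Ψ t| ≤ B) (hpos : ∀ x σ, 0 < gaussMoment Ψ 0 x σ)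

include hΨ hB

lemma hasDerivAt_gaussMoment_iteratedDeriv_fst {k : ℕ} (hk : k < N) (a : ℕ) (x σ : ℝ) :
    HasDerivAt (fun y => gaussMoment (iteratedDeriv k Ψ) a y σ)
      (gaussMoment (iteratedDeriv (k + 1) Ψ) a x σ) x := by
  obtain ⟨B, hBk⟩ := hB k hk.le
  obtain ⟨B', hBk'⟩ := hB (k + 1) hk
  exact hasDerivAt_gaussMoment_fst (hasDerivAt_iteratedDeriv hΨ hk)
    (hΨ.continuous_iteratedDeriv _ (by exact_mod_cast hk)) hBk hBk' a x σ

lemma hasDerivAt_gaussMoment_iteratedDeriv_snd {k : ℕ} (hk : k < N) (a : ℕ) (x σ : ℝ) :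
    HasDerivAt (fun τ => gaussMoment (iteratedDeriv k Ψ) a x τ)
      (gaussMoment (iteratedDeriv (k + 1) Ψ) (a + 1) x σ) σ := by
  obtain ⟨B, hBk⟩ := hB k hk.le
  obtain ⟨B', hBk'⟩ := hB (k + 1) hk
  exact hasDerivAt_gaussMoment_snd (hasDerivAt_iteratedDeriv hΨ hk)
    (hΨ.continuous_iteratedDeriv _ (by exact_mod_cast hk)) hBk hBk' a x σ

include hpos

lemma hasDerivAt_momentRatio_fst {k : ℕ} (hk : k < N) (a : ℕ) (x σ : ℝ) :
    HasDerivAt (fun y => momentRatio Ψ k a y σ)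
      (momentRatio Ψ (k + 1) a x σ - momentRatio Ψ k a x σ * momentRatio Ψ 1 0 x σ) x := by
  have h0 := hasDerivAt_gaussMoment_iteratedDeriv_fst hΨ hB (k := 0) (hk.trans_le' k.zero_le) 0 x σ
  rw [iteratedDeriv_zero] at h0
  refine ((hasDerivAt_gaussMoment_iteratedDeriv_fst hΨ hB hk a x σ).div h0
    (hpos x σ).ne').congr_deriv ?_
  simp only [momentRatio, zero_add]
  field_simp

lemma hasDerivAt_momentRatio_snd {k : ℕ} (hk : k < N) (a : ℕ) (x σ : ℝ) :
    HasDerivAt (fun τ => momentRatio Ψ k a x τ)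
      (momentRatio Ψ (k + 1) (a + 1) x σ - momentRatio Ψ k a x σ * momentRatio Ψ 1 1 x σ) σ := by
  have h0 := hasDerivAt_gaussMoment_iteratedDeriv_snd hΨ hB (k := 0) (hk.trans_le' k.zero_le) 0 x σ
  rw [iteratedDeriv_zero] at h0
  refine ((hasDerivAt_gaussMoment_iteratedDeriv_snd hΨ hB hk a x σ).div h0
    (hpos x σ).ne').congr_deriv ?_
  simp only [momentRatio, zero_add]
  field_simp

end momentRatio

inductive IsMomentRatioPoly (Ψ : ℝ → ℝ) : ℕ → (ℝ → ℝ → ℝ) → Prop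
  | ratio {n k : ℕ} (a : ℕ) : 1 ≤ k → k ≤ n → IsMomentRatioPoly Ψ n (momentRatio Ψ k a)
  | add {n : ℕ} {F G : ℝ → ℝ → ℝ} : IsMomentRatioPoly Ψ n F → IsMomentRatioPoly Ψ n G →
      IsMomentRatioPoly Ψ n fun x σ => F x σ + G x σ
  | sub {n : ℕ} {F G : ℝ → ℝ → ℝ} : IsMomentRatioPoly Ψ n F → IsMomentRatioPoly Ψ n G →
      IsMomentRatioPoly Ψ n fun x σ => F x σ - G x σ
  | mul {n : ℕ} {F G : ℝ → ℝ → ℝ} : IsMomentRatioPoly Ψ n F → IsMomentRatioPoly Ψ n G →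
      IsMomentRatioPoly Ψ n fun x σ => F x σ * G x σ

namespace IsMomentRatioPoly

variable {Ψ : ℝ → ℝ} {N n : ℕ} {F : ℝ → ℝ → ℝ}

lemma mono {n' : ℕ} (hF : IsMomentRatioPoly Ψ n F) (hn : n ≤ n') : IsMomentRatioPoly Ψ n' F := by
  induction hF with
  | ratio a hk₁ hk => exact ratio a hk₁ (hk.trans hn)
  | add _ _ ihF ihG => exact ihF.add ihG
  | sub _ _ ihF ihG => exact ihF.sub ihG
  | mul _ _ ihF ihG => exact ihF.mul ihG

lemma exists_bound {I : Set ℝ} (hF : IsMomentRatioPoly Ψ n F)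
    (hratio : ∀ k a, 1 ≤ k → k ≤ n → ∃ C, ∀ x, ∀ σ ∈ I, |momentRatio Ψ k a x σ| ≤ C) :
    ∃ C, ∀ x, ∀ σ ∈ I, |F x σ| ≤ C := by
  induction hF with
  | ratio a hk₁ hk => exact hratio _ a hk₁ hk
  | add _ _ ihF ihG =>
    obtain ⟨C, hC⟩ := ihF
    obtain ⟨D, hD⟩ := ihG
    exact ⟨C + D, fun x σ hσ => (abs_add_le _ _).trans (add_le_add (hC x σ hσ) (hD x σ hσ))⟩
  | sub _ _ ihF ihG =>
    obtain ⟨C, hC⟩ := ihF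
    obtain ⟨D, hD⟩ := ihG
    exact ⟨C + D, fun x σ hσ => (abs_sub _ _).trans (add_le_add (hC x σ hσ) (hD x σ hσ))⟩
  | mul _ _ ihF ihG =>
    obtain ⟨C, hC⟩ := ihF
    obtain ⟨D, hD⟩ := ihG
    exact ⟨C * D, fun x σ hσ => (abs_mul _ _).trans_le
      (mul_le_mul (hC x σ hσ) (hD x σ hσ) (abs_nonneg _) ((abs_nonneg _).trans (hC x σ hσ)))⟩

variable (hΨ : ContDiff ℝ N Ψ) (hB : ∀ k ≤ N, ∃ B, ∀ t, |iteratedDeriv k Ψ t| ≤ B)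
  (hpos : ∀ x σ, 0 < gaussMoment Ψ 0 x σ)

include hΨ hB hpos

lemma exists_hasDerivAt_fst (hF : IsMomentRatioPoly Ψ n F) (hn : n < N) :
    ∃ F', IsMomentRatioPoly Ψ (n + 1) F' ∧ ∀ x σ, HasDerivAt (fun y => F y σ) (F' x σ) x := by
  induction hF with
  | @ratio k a hk₁ hk =>
    exact ⟨_, (ratio a (by omega) (by omega)).sub ((ratio a hk₁ (by omega)).mul
      (ratio 0 le_rfl (by omega))), hasDerivAt_momentRatio_fst hΨ hB hpos (by omega) a⟩
  | add hF hG ihF ihG =>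
    obtain ⟨F', hF', hdF⟩ := ihF
    obtain ⟨G', hG', hdG⟩ := ihG
    exact ⟨_, hF'.add hG', fun x σ => (hdF x σ).add (hdG x σ)⟩
  | sub hF hG ihF ihG =>
    obtain ⟨F', hF', hdF⟩ := ihF
    obtain ⟨G', hG', hdG⟩ := ihG
    exact ⟨_, hF'.sub hG', fun x σ => (hdF x σ).sub (hdG x σ)⟩
  | mul hF hG ihF ihG =>
    obtain ⟨F', hF', hdF⟩ := ihF
    obtain ⟨G', hG', hdG⟩ := ihG
    exact ⟨_, (hF'.mul (hG.mono n.le_succ)).add ((hF.mono n.le_succ).mul hG'),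
      fun x σ => (hdF x σ).mul (hdG x σ)⟩

lemma exists_hasDerivAt_snd (hF : IsMomentRatioPoly Ψ n F) (hn : n < N) :
    ∃ F', IsMomentRatioPoly Ψ (n + 1) F' ∧ ∀ x σ, HasDerivAt (fun τ => F x τ) (F' x σ) σ := by
  induction hF with
  | @ratio k a hk₁ hk =>
    exact ⟨_, (ratio (a + 1) (by omega) (by omega)).sub ((ratio a hk₁ (by omega)).mul
      (ratio 1 le_rfl (by omega))), fun x => hasDerivAt_momentRatio_snd hΨ hB hpos (by omega) a x⟩
  | add hF hG ihF ihG =>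
    obtain ⟨F', hF', hdF⟩ := ihF
    obtain ⟨G', hG', hdG⟩ := ihG
    exact ⟨_, hF'.add hG', fun x σ => (hdF x σ).add (hdG x σ)⟩
  | sub hF hG ihF ihG =>
    obtain ⟨F', hF', hdF⟩ := ihF
    obtain ⟨G', hG', hdG⟩ := ihG
    exact ⟨_, hF'.sub hG', fun x σ => (hdF x σ).sub (hdG x σ)⟩
  | mul hF hG ihF ihG =>
    obtain ⟨F', hF', hdF⟩ := ihF
    obtain ⟨G', hG', hdG⟩ := ihG
    exact ⟨_, (hF'.mul (hG.mono n.le_succ)).add ((hF.mono n.le_succ).mul hG'),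
      fun x σ => (hdF x σ).mul (hdG x σ)⟩

lemma exists_iteratedDeriv_fst (hF : IsMomentRatioPoly Ψ n F) {i : ℕ} (hi : n + i ≤ N) :
    ∃ G, IsMomentRatioPoly Ψ (n + i) G ∧
      ∀ σ, iteratedDeriv i (fun x => F x σ) = fun x => G x σ := by
  induction i generalizing n F with
  | zero => exact ⟨F, hF, fun σ => iteratedDeriv_zero⟩
  | succ i ih =>
    obtain ⟨F', hF', hd⟩ := hF.exists_hasDerivAt_fst hΨ hB hpos (by omega)
    obtain ⟨G, hG, hGeq⟩ := ih hF' (by omega)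
    refine ⟨G, by rwa [add_right_comm] at hG, fun σ => ?_⟩
    rw [iteratedDeriv_succ', funext fun x => (hd x σ).deriv, hGeq]

lemma exists_iteratedDeriv_snd (hF : IsMomentRatioPoly Ψ n F) {j : ℕ} (hj : n + j ≤ N) :
    ∃ G, IsMomentRatioPoly Ψ (n + j) G ∧
      ∀ x, iteratedDeriv j (fun σ => F x σ) = fun σ => G x σ := by
  induction j generalizing n F with
  | zero => exact ⟨F, hF, fun x => iteratedDeriv_zero⟩
  | succ j ih =>
    obtain ⟨F', hF', hd⟩ := hF.exists_hasDerivAt_snd hΨ hB hpos (by omega)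
    obtain ⟨G, hG, hGeq⟩ := ih hF' (by omega)
    refine ⟨G, by rwa [add_right_comm] at hG, fun x => ?_⟩
    rw [iteratedDeriv_succ', funext fun σ => (hd x σ).deriv, hGeq]

lemma exists_iteratedDeriv_iteratedDeriv (hF : IsMomentRatioPoly Ψ n F) {i j : ℕ}
    (hij : n + i + j ≤ N) :
    ∃ G, IsMomentRatioPoly Ψ (n + i + j) G ∧ ∀ x σ,
      iteratedDeriv j (fun σ' => iteratedDeriv i (fun x' => F x' σ') x) σ = G x σ := by
  obtain ⟨F₁, hF₁, hF₁eq⟩ := hF.exists_iteratedDeriv_fst hΨ hB hpos (i := i) (by omega)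
  obtain ⟨G, hG, hGeq⟩ := hF₁.exists_iteratedDeriv_snd hΨ hB hpos hij
  exact ⟨G, hG, fun x σ => by simp only [hF₁eq, hGeq]⟩

end IsMomentRatioPoly

section logMissProb

lemma logMissProb_eq_log_gaussMoment (Ψ : ℝ → ℝ) (x σ : ℝ) :
    logMissProb Ψ x σ = Real.log (gaussMoment Ψ 0 x σ) := by
  simp [logMissProb, gaussMoment]

variable {Ψ : ℝ → ℝ} {N : ℕ} (hΨ : ContDiff ℝ N Ψ)
  (hB : ∀ k ≤ N, ∃ B, ∀ t, |iteratedDeriv k Ψ t| ≤ B) (hpos : ∀ x σ, 0 < gaussMoment Ψ 0 x σ)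

include hΨ hB hpos

lemma deriv_logMissProb_fst (hN : 0 < N) (σ : ℝ) :
    deriv (fun x => logMissProb Ψ x σ) = fun x => momentRatio Ψ 1 0 x σ := by
  refine funext fun x => ?_
  have h0 := hasDerivAt_gaussMoment_iteratedDeriv_fst hΨ hB (k := 0) hN 0 x σ
  rw [iteratedDeriv_zero] at h0
  simp only [logMissProb_eq_log_gaussMoment]
  exact (h0.log (hpos x σ).ne').deriv

lemma deriv_logMissProb_snd (hN : 0 < N) (x : ℝ) :
    deriv (fun σ => logMissProb Ψ x σ) = fun σ => momentRatio Ψ 1 1 x σ := by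
  refine funext fun σ => ?_
  have h0 := hasDerivAt_gaussMoment_iteratedDeriv_snd hΨ hB (k := 0) hN 0 x σ
  rw [iteratedDeriv_zero] at h0
  simp only [logMissProb_eq_log_gaussMoment]
  exact (h0.log (hpos x σ).ne').deriv

lemma exists_iteratedDeriv_iteratedDeriv_logMissProb {i j : ℕ} (h₁ : 1 ≤ i + j)
    (hN : i + j ≤ N) :
    ∃ F, IsMomentRatioPoly Ψ (i + j) F ∧ ∀ x σ,
      iteratedDeriv j (fun σ' => iteratedDeriv i (fun x' => logMissProb Ψ x' σ') x) σ = F x σ := by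
  rcases i with _ | i
  · obtain ⟨j, rfl⟩ : ∃ j', j = j' + 1 := ⟨j - 1, by omega⟩
    obtain ⟨F, hF, hFeq⟩ := (IsMomentRatioPoly.ratio (Ψ := Ψ) 1 le_rfl le_rfl)
      |>.exists_iteratedDeriv_snd hΨ hB hpos (j := j) (by omega)
    refine ⟨F, by convert hF using 1; omega, fun x σ => ?_⟩
    simp only [iteratedDeriv_zero, iteratedDeriv_succ', deriv_logMissProb_snd hΨ hB hpos (by omega),
      hFeq]
  · obtain ⟨F, hF, hFeq⟩ := (IsMomentRatioPoly.ratio (Ψ := Ψ) 0 le_rfl le_rfl)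
      |>.exists_iteratedDeriv_iteratedDeriv hΨ hB hpos (i := i) (j := j) (by omega)
    refine ⟨F, by convert hF using 1; omega, fun x σ => ?_⟩
    simp only [iteratedDeriv_succ', deriv_logMissProb_fst hΨ hB hpos (by omega), hFeq]

end logMissProb

lemma exists_bound_iteratedDeriv_iteratedDeriv_logMissProb {Ψ : ℝ → ℝ} {N : ℕ} {m κ s : ℝ}
    (hΨ : ContDiff ℝ N Ψ) (hmono : Monotone Ψ) (hΨ₁ : ∀ t, Ψ t ≤ 1) (hm : 0 ≤ m) (hκ : 0 < κ)
    (hκΨ : ∀ t, κ ≤ (1 + |t|) ^ m * Ψ t)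
    (hdecay : ∀ k, 1 ≤ k → k ≤ N → ∃ K, ∀ t, (1 + |t|) ^ m * |iteratedDeriv k Ψ t| ≤ K)
    {i j : ℕ} (h₁ : 1 ≤ i + j) (hN : i + j ≤ N) :
    ∃ C, ∀ x, ∀ σ ∈ Icc 0 s,
      |iteratedDeriv j (fun σ' => iteratedDeriv i (fun x' => logMissProb Ψ x' σ') x) σ| ≤ C := by
  have hΨpos : ∀ t, 0 < Ψ t := fun t =>
    pos_of_mul_pos_right (hκ.trans_le (hκΨ t)) (by positivity)
  have hΨabs : ∀ t, |Ψ t| ≤ 1 := fun t => abs_le.2 ⟨by linarith [hΨpos t], hΨ₁ t⟩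
  have hB : ∀ k ≤ N, ∃ B, ∀ t, |iteratedDeriv k Ψ t| ≤ B := by
    rintro (_ | k) hk
    · exact ⟨1, by simpa using hΨabs⟩
    · obtain ⟨K, hK⟩ := hdecay (k + 1) (by omega) hk
      exact ⟨K, fun t => (le_mul_of_one_le_left (abs_nonneg _)
        (one_le_rpow (by linarith [abs_nonneg t]) hm)).trans (hK t)⟩
  have hpos : ∀ x σ, 0 < gaussMoment Ψ 0 x σ := gaussMoment_zero_pos hΨ.continuous hΨpos hΨabs
  obtain ⟨F, hF, hFeq⟩ := exists_iteratedDeriv_iteratedDeriv_logMissProb hΨ hB hpos h₁ hN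
  obtain ⟨C, hC⟩ := hF.exists_bound (I := Icc 0 s) fun k a hk₁ hk => by
    obtain ⟨K, hK⟩ := hdecay k hk₁ (by omega)
    exact ⟨_, fun x σ hσ => abs_gaussMoment_div_gaussMoment_le hm hK hΨ.continuous hmono hΨabs
      hκ hκΨ a x hσ.1 hσ.2⟩
  exact ⟨C, fun x σ hσ => hFeq x σ ▸ hC x σ hσ⟩

theorem stmt5_general (c m M s : ℝ) (hc : 0 < c) (hm : 0 < m) (hM : 0 < M) (hs : 1 < s)
    (Ψ : ℝ → ℝ)
    (hsmooth : ContDiff ℝ 6 Ψ) (hmono : Monotone Ψ)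
    (htop : Tendsto Ψ atTop (𝓝 1))
    (hder_bd : ∀ j ∈ Finset.Icc 1 6, ∀ x : ℝ, |iteratedDeriv j Ψ x| ≤ c)
    (htail_lb : ∀ x : ℝ, x < -M → c⁻¹ ≤ |x| ^ m * Ψ x)
    (htail_der : ∀ j ∈ Finset.Icc 1 6, ∀ x : ℝ, M < |x| → |x| ^ m * |iteratedDeriv j Ψ x| ≤ c) :
    ∃ ctil : ℝ, 0 < ctil ∧
      ∀ (i j : ℕ), 1 ≤ i + j → i + j ≤ 3 →
        ∀ (x σ : ℝ), σ ∈ Set.Ioo s⁻¹ s →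
          |iteratedDeriv j (fun σ' => iteratedDeriv i (fun x' => logMissProb Ψ x' σ') x) σ|
            ≤ ctil := by
  obtain ⟨κ, hκ, hκΨ⟩ := exists_pos_le_one_add_abs_rpow_mul hc hm.le hmono htail_lb
  have hdecay : ∀ k, 1 ≤ k → k ≤ 6 → ∃ K, ∀ t, (1 + |t|) ^ m * |iteratedDeriv k Ψ t| ≤ K :=
    fun k h₁ h₆ => exists_one_add_abs_rpow_mul_abs_le hM hm.le
      (hder_bd k (Finset.mem_Icc.2 ⟨h₁, h₆⟩)) (htail_der k (Finset.mem_Icc.2 ⟨h₁, h₆⟩))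
  let S := (Finset.range 4 ×ˢ Finset.range 4).filter fun p : ℕ × ℕ => 1 ≤ p.1 + p.2 ∧ p.1 + p.2 ≤ 3
  have hS : ∀ p ∈ S, ∀ᶠ C in atTop, ∀ x, ∀ σ ∈ Ioo s⁻¹ s,
      |iteratedDeriv p.2 (fun σ' => iteratedDeriv p.1 (fun x' => logMissProb Ψ x' σ') x) σ|
        ≤ C := by
    rintro ⟨i, j⟩ hp
    simp only [S, Finset.mem_filter] at hp
    obtain ⟨C, hC⟩ := exists_bound_iteratedDeriv_iteratedDeriv_logMissProb (N := 6) (s := s) hsmooth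
      hmono (hmono.ge_of_tendsto htop) hm.le hκ hκΨ hdecay hp.2.1 (by omega)
    exact (eventually_ge_atTop C).mono fun C' hC' x σ hσ =>
      (hC x σ ⟨(inv_pos.2 (by linarith)).le.trans hσ.1.le, hσ.2.le⟩).trans hC'
  obtain ⟨C, hC₀, hC⟩ := ((eventually_gt_atTop 0).and ((eventually_all_finset S).2 hS)).exists
  exact ⟨C, hC₀, fun i j h₁ h₃ x σ hσ => hC (i, j) (by simp [S]; omega) x σ hσ⟩

/-- Lemma on bounded derivatives of the observed-data log-likelihood pieces:
for a six-times continuously differentiable CDF `Ψ` that is symmetric, has bounded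
derivatives, a polynomially lower-bounded left tail, and polynomially decaying derivative
tails, all partial derivatives of `μ(x,σ) = log ∫ Ψ(x+σe)φ(e)de` of total order `1`, `2`
or `3` are uniformly bounded on `ℝ × (s⁻¹, s)`. Mixed partials are expressed by first
differentiating `i` times in `x` and then `j` times in `σ`. -/
theorem stmt5 (c m M s : ℝ) (hc : 0 < c) (hm : 0 < m) (hM : 0 < M) (hs : 1 < s)
    (Ψ : ℝ → ℝ)
    (hsmooth : ContDiff ℝ 6 Ψ) (hmono : Monotone Ψ)
    (hbot : Tendsto Ψ atBot (𝓝 0)) (htop : Tendsto Ψ atTop (𝓝 1))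
    (hsymm : ∀ x : ℝ, Ψ (-x) = 1 - Ψ x)
    (hder_bd : ∀ j ∈ Finset.Icc 1 6, ∀ x : ℝ, |iteratedDeriv j Ψ x| ≤ c)
    (htail_lb : ∀ x : ℝ, x < -M → c⁻¹ ≤ |x| ^ m * Ψ x)
    (htail_der : ∀ j ∈ Finset.Icc 1 6, ∀ x : ℝ, M < |x| → |x| ^ m * |iteratedDeriv j Ψ x| ≤ c) :
    ∃ ctil : ℝ, 0 < ctil ∧
      ∀ (i j : ℕ), 1 ≤ i + j → i + j ≤ 3 →
        ∀ (x σ : ℝ), σ ∈ Set.Ioo s⁻¹ s →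
          |iteratedDeriv j (fun σ' => iteratedDeriv i (fun x' => logMissProb Ψ x' σ') x) σ|
            ≤ ctil :=
  stmt5_general c m M s hc hm hM hs Ψ hsmooth hmono htop hder_bd htail_lb htail_der
end
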